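/- arXiv:2308.15221 — 3 statements merged into one kernel-verified Lean document; each statement's English description precedes it below -/
import Mathlib

section
/- Let n and k be integers with 1 ≤ k ≤ n−2, and let λ and μ be partitions in the (k+1)×(n−k) box satisfying |λ| ≤ |μ| − k(n−k) + (k+1). Then it is NOT the case that λ ≤ μ if and only if either λ = (n−k, 0, …, 0) and μ = (n−k−1, n−k−1, …, n−k−1), or λ = (1, 1, …, 1) and μ = (n−k, …, n−k, 0). -/
/-!
If `λ_i > μ_i` at row `i`, set `a = λ_i` and `m = n - k`. Being antitone, `λ` dominates the
rectangle `(a^{i+1}, 0, …)`, while `μ`, being bounded by `m` and antitone, is dominated by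
`(m^i, (a-1)^{k+1-i})`. Comparing sizes with the codimension bound leaves a slack
`(k - i)(m - a) + i(a - 1)` that must vanish, so both comparisons are equalities, and
`1 ≤ k`, `2 ≤ m` leave only `(i, a) = (0, m)` or `(k, 1)`.
-/

/-- A partition in the `(k+1) × (n-k)` box: a weakly decreasing sequence
`λ_1 ≥ … ≥ λ_{k+1}` (indexed by `Fin (k+1)`) with all parts at most `n - k`. -/
def IsBoxPartition (n k : ℕ) (lam : Fin (k + 1) → ℕ) : Prop :=
  (∀ i, lam i ≤ n - k) ∧ Antitone lam

open Finset

theorem Fin.sum_ite_val_lt {M : Type*} [AddCommMonoid M] {K i : ℕ} (hi : i ≤ K) (a b : M) :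
    ∑ j : Fin K, (if (j : ℕ) < i then a else b) = i • a + (K - i) • b := by
  obtain ⟨t, rfl⟩ := Nat.exists_eq_add_of_le hi
  simp [Fin.sum_univ_add]

theorem Fintype.eq_of_le_of_sum_le {ι M : Type*} [Fintype ι] [AddCommMonoid M] [PartialOrder M]
    [IsOrderedCancelAddMonoid M] {f g : ι → M} (h : f ≤ g)
    (hs : ∑ i, g i ≤ ∑ i, f i) : f = g :=
  funext fun i => (sum_eq_sum_iff_of_le fun i _ => h i).1
    (le_antisymm (sum_le_sum fun i _ => h i) hs) i (mem_univ i)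

theorem Antitone.ite_le_self {K : ℕ} {f : Fin K → ℕ} (hf : Antitone f) (i : Fin K) :
    (fun j : Fin K => if (j : ℕ) < i + 1 then f i else 0) ≤ f := by
  intro j
  dsimp only
  split_ifs with h
  · exact hf (Fin.le_iff_val_le_val.2 (by omega))
  · exact Nat.zero_le _

theorem Antitone.le_ite {K : ℕ} {f : Fin K → ℕ} (hf : Antitone f) {m b : ℕ} (hm : ∀ j, f j ≤ m)
    {i : Fin K} (hb : f i ≤ b) : f ≤ fun j : Fin K => if (j : ℕ) < i then m else b := by
  intro j
  dsimp only
  split_ifs with h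
  · exact hm j
  · exact (hf (Fin.le_iff_val_le_val.2 (by omega))).trans hb

theorem codim_slack_eq {i k a m : ℕ} (hik : i ≤ k) (ha : 1 ≤ a) (ham : a ≤ m) :
    (i + 1) * a + k * m =
      i * m + (k + 1 - i) * (a - 1) + (k + 1) + ((k - i) * (m - a) + i * (a - 1)) := by
  obtain ⟨t, rfl⟩ := Nat.exists_eq_add_of_le hik
  obtain ⟨c, rfl⟩ := Nat.exists_eq_add_of_le ha
  obtain ⟨s, rfl⟩ := Nat.exists_eq_add_of_le ham
  rw [show i + t + 1 - i = t + 1 by omega, show 1 + c - 1 = c by omega,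
    show 1 + c + s - (1 + c) = s by omega, Nat.add_sub_cancel_left]
  ring

theorem IsBoxPartition.eq_ite_of_lt {n k : ℕ} {lam mu : Fin (k + 1) → ℕ}
    (hlam : IsBoxPartition n k lam) (hmu : IsBoxPartition n k mu)
    (hcodim : (∑ i, lam i) + k * (n - k) ≤ (∑ i, mu i) + (k + 1))
    {i : Fin (k + 1)} (hi : mu i < lam i) :
    (lam = fun j : Fin (k + 1) => if (j : ℕ) < i + 1 then lam i else 0) ∧
      (mu = fun j : Fin (k + 1) => if (j : ℕ) < i then n - k else lam i - 1) ∧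
      (k - i) * (n - k - lam i) = 0 ∧ i * (lam i - 1) = 0 := by
  have hlow := hlam.2.ite_le_self i
  have hup := hmu.2.le_ite hmu.1 (i := i) (b := lam i - 1) (by omega)
  have hlow_sum : ∑ j : Fin (k + 1), (if (j : ℕ) < i + 1 then lam i else 0) = (i + 1) * lam i := by
    simpa using Fin.sum_ite_val_lt (K := k + 1) (i := i + 1) i.is_lt (lam i) 0
  have hup_sum : ∑ j : Fin (k + 1), (if (j : ℕ) < i then n - k else lam i - 1) =
      i * (n - k) + (k + 1 - i) * (lam i - 1) :=
    Fin.sum_ite_val_lt i.is_le' _ _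
  have hl : (i + 1) * lam i ≤ ∑ j, lam j := hlow_sum ▸ sum_le_sum fun j _ => hlow j
  have hu : ∑ j, mu j ≤ i * (n - k) + (k + 1 - i) * (lam i - 1) :=
    hup_sum ▸ sum_le_sum fun j _ => hup j
  have hslack := codim_slack_eq (i := i) (k := k) i.is_le (by omega) (hlam.1 i)
  have hslack₁ := Nat.zero_le ((k - i) * (n - k - lam i))
  have hslack₂ := Nat.zero_le (i * (lam i - 1))
  refine ⟨(Fintype.eq_of_le_of_sum_le hlow ?_).symm, Fintype.eq_of_le_of_sum_le hup ?_, ?_, ?_⟩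
  · rw [hlow_sum]; linarith
  · rw [hup_sum]; linarith
  all_goals linarith

/-- Proposition 2.7: for partitions `λ, μ` in the `(k+1)×(n-k)` box with
`|λ| ≤ |μ| - k(n-k) + (k+1)`, one has `λ ≰ μ` iff
`λ = (n-k,0,…,0), μ = (n-k-1,…,n-k-1)` or `λ = (1,…,1), μ = (n-k,…,n-k,0)`. -/
theorem box_partition_not_le_iff (n k : ℕ) (hk : 1 ≤ k) (hkn : k + 2 ≤ n)
    (lam mu : Fin (k + 1) → ℕ)
    (hlam : IsBoxPartition n k lam) (hmu : IsBoxPartition n k mu)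
    (hcodim : (∑ i, lam i) + k * (n - k) ≤ (∑ i, mu i) + (k + 1)) :
    (¬ ∀ i, lam i ≤ mu i) ↔
      ((lam = fun i : Fin (k + 1) => if (i : ℕ) = 0 then n - k else 0) ∧
        (mu = fun _ => n - k - 1)) ∨
      ((lam = fun _ => 1) ∧
        (mu = fun i : Fin (k + 1) => if (i : ℕ) = k then 0 else n - k)) := by
  constructor
  · intro h
    obtain ⟨i, hi⟩ := not_forall.mp h
    obtain ⟨hl, hu, h₁, h₂⟩ := hlam.eq_ite_of_lt hmu hcodim (not_le.mp hi)
    have hm := hlam.1 i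
    rcases Nat.eq_zero_or_pos (i : ℕ) with hi0 | hipos
    · have ha : lam i = n - k := by
        rw [hi0, Nat.sub_zero, Nat.mul_eq_zero] at h₁
        omega
      left
      rw [hl, hu, ha, hi0]
      constructor <;> funext j <;> split_ifs <;> omega
    · have ha : lam i = 1 := by
        rw [Nat.mul_eq_zero] at h₂
        omega
      have hik : (i : ℕ) = k := by
        rw [ha, Nat.mul_eq_zero] at h₁
        omega
      right
      rw [hl, hu, ha, hik]
      constructor <;> funext j <;> split_ifs <;> omega
  · rintro (⟨rfl, rfl⟩ | ⟨rfl, rfl⟩) h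
    · have h0 := h 0
      simp only [Fin.coe_ofNat_eq_mod, Nat.zero_mod, ↓reduceIte] at h0
      omega
    · simpa using h (Fin.last k)
end

section
/- Let n and k be integers with 1 ≤ k ≤ n−2, and let λ and μ be partitions in the (k+1)×(n−k) box satisfying |λ| ≤ |μ| − k(n−k) + (k+1). If λ_1 > μ_1, then λ_1 = μ_1 + 1 and λ_j = 0 for every j with 2 ≤ j ≤ k+1. -/
/-!
Write `M = n - k` and `T = λ_2 + ⋯ + λ_{k+1}`. Since `μ` is decreasing, `|μ| ≤ (k+1) μ_1`, and
`μ_1 + 1 ≤ λ_1 ≤ M`, so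
`λ_1 + T + kM ≤ (k+1)(μ_1 + 1) ≤ (k+1) λ_1 = λ_1 + k λ_1 ≤ λ_1 + kM`.
Both ends agree up to `T`, so `T = 0` and every inequality in the chain is an equality;
in particular `λ_1 = μ_1 + 1`.
-/

theorem Antitone.sum_le_card_mul_apply_zero {m : ℕ} {f : Fin (m + 1) → ℕ} (hf : Antitone f) :
    ∑ i, f i ≤ (m + 1) * f 0 := by
  simpa using Finset.sum_le_card_nsmul Finset.univ f (f 0) fun i _ => hf (Fin.zero_le i)

theorem Fin.apply_eq_zero_of_sum_succ_eq_zero {m : ℕ} {f : Fin (m + 1) → ℕ}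
    (h : ∑ i : Fin m, f i.succ = 0) (j : Fin (m + 1)) (hj : 1 ≤ (j : ℕ)) : f j = 0 := by
  obtain ⟨i, rfl⟩ := Fin.exists_succ_eq.mpr (Fin.pos_iff_ne_zero.mp hj)
  exact Finset.sum_eq_zero_iff.mp h i (Finset.mem_univ i)

theorem box_partition_first_part_gt_aux_general (n k : ℕ)
    (lam mu : Fin (k + 1) → ℕ)
    (hlam : IsBoxPartition n k lam) (hmu : IsBoxPartition n k mu)
    (hcodim : (∑ i, lam i) + k * (n - k) ≤ (∑ i, mu i) + (k + 1))
    (hgt : mu 0 < lam 0) :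
    lam 0 = mu 0 + 1 ∧ ∀ j : Fin (k + 1), 1 ≤ (j : ℕ) → lam j = 0 := by
  set T := ∑ i : Fin k, lam i.succ
  have hsplit : ∑ i, lam i = lam 0 + T := Fin.sum_univ_succ lam
  have hmu_sum := hmu.2.sum_le_card_mul_apply_zero
  have hupper : (k + 1) * lam 0 ≤ lam 0 + k * (n - k) := by
    have := Nat.mul_le_mul_left k (hlam.1 0)
    linarith
  have hlower : (k + 1) * (mu 0 + 1) ≤ (k + 1) * lam 0 := Nat.mul_le_mul_left _ hgt
  have hT : T = 0 := by linarith
  have hfirst : (k + 1) * lam 0 = (k + 1) * (mu 0 + 1) := by linarith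
  exact ⟨Nat.eq_of_mul_eq_mul_left k.succ_pos hfirst, Fin.apply_eq_zero_of_sum_succ_eq_zero hT⟩

/-- If `|λ| ≤ |μ| - k(n-k) + (k+1)` and `λ_1 > μ_1`, then `λ_1 = μ_1 + 1` and
all parts `λ_j` with `j ≥ 2` vanish. -/
theorem box_partition_first_part_gt_aux (n k : ℕ) (hk : 1 ≤ k) (hkn : k + 2 ≤ n)
    (lam mu : Fin (k + 1) → ℕ)
    (hlam : IsBoxPartition n k lam) (hmu : IsBoxPartition n k mu)
    (hcodim : (∑ i, lam i) + k * (n - k) ≤ (∑ i, mu i) + (k + 1))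
    (hgt : mu 0 < lam 0) :
    lam 0 = mu 0 + 1 ∧ ∀ j : Fin (k + 1), 1 ≤ (j : ℕ) → lam j = 0 :=
  box_partition_first_part_gt_aux_general n k lam mu hlam hmu hcodim hgt
end

section
/- Let n and k be integers with 1 ≤ k ≤ n−2, and let λ and μ be partitions in the (k+1)×(n−k) box satisfying |λ| ≤ |μ| − k(n−k) + (k+1). If h is an integer with 1 ≤ h ≤ k and λ_{h+1} > μ_{h+1}, then λ_{h+1} = μ_{h+1} + 1, λ_{h+1} = 1, μ_{h+1} = 0, |μ| = k(n−k) − (k−h), and |λ| = h+1. -/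
open Finset

theorem Antitone.succ_mul_le_sum {n : ℕ} {f : Fin n → ℕ} (hf : Antitone f) (i : Fin n) :
    (i + 1) * f i ≤ ∑ j, f j :=
  calc (i + 1) * f i = ∑ _j ∈ Iic i, f i := by simp
    _ ≤ ∑ j ∈ Iic i, f j := sum_le_sum fun j hj => hf (mem_Iic.mp hj)
    _ ≤ ∑ j, f j := sum_le_sum_of_subset (subset_univ _)

theorem Antitone.sum_le_mul_add_mul {n m : ℕ} {f : Fin n → ℕ} (hf : Antitone f)
    (hfm : ∀ j, f j ≤ m) (i : Fin n) : ∑ j, f j ≤ i * m + (n - i) * f i := by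
  rw [← sum_filter_add_sum_filter_not univ (· < i)]
  gcongr
  · calc ∑ j ∈ univ.filter (· < i), f j ≤ ∑ _j ∈ Iio i, m := by
          rw [filter_gt_eq_Iio]; exact sum_le_sum fun j _ => hfm j
      _ = i * m := by simp
  · calc ∑ j ∈ univ.filter (¬ · < i), f j ≤ ∑ _j ∈ Ici i, f i := by
          simp only [not_lt, filter_le_eq_Ici]
          exact sum_le_sum fun j hj => hf (mem_Ici.mp hj)
      _ = (n - i) * f i := by simp

theorem Nat.eq_zero_and_eq_one_and_eq_of_codim_le {h k m a b : ℕ} (hh : 1 ≤ h) (hhk : h ≤ k)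
    (hab : a < b) (hbm : b ≤ m) (hm : 2 ≤ m)
    (hcodim : (h + 1) * b + k * m ≤ h * m + (k + 1 - h) * a + (k + 1)) :
    a = 0 ∧ b = 1 ∧ h = k := by
  obtain ⟨d, rfl⟩ := Nat.exists_eq_add_of_le hhk
  obtain ⟨c, rfl⟩ := Nat.exists_eq_add_of_le hbm
  obtain ⟨e, rfl⟩ := Nat.exists_eq_add_of_lt hab
  rw [show h + d + 1 - h = d + 1 by omega] at hcodim
  have hslack : h * a + e + d * c = 0 := by nlinarith
  simp only [Nat.add_eq_zero_iff, mul_eq_zero] at hslack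
  omega

/-- Equalities (10) in the paper: if `|λ| ≤ |μ| - k(n-k) + (k+1)` and
`λ_{h+1} > μ_{h+1}` with `1 ≤ h ≤ k`, then `λ_{h+1} = μ_{h+1} + 1 = 1`,
`μ_{h+1} = 0`, `|μ| = k(n-k) - (k-h)` and `|λ| = h + 1`. -/
theorem box_partition_later_part_gt_aux (n k : ℕ) (hkn : k + 2 ≤ n)
    (lam mu : Fin (k + 1) → ℕ)
    (hlam : IsBoxPartition n k lam) (hmu : IsBoxPartition n k mu)
    (hcodim : (∑ i, lam i) + k * (n - k) ≤ (∑ i, mu i) + (k + 1))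
    (h : ℕ) (hh1 : 1 ≤ h) (hhk : h ≤ k)
    (hgt : mu ⟨h, by omega⟩ < lam ⟨h, by omega⟩) :
    lam ⟨h, by omega⟩ = mu ⟨h, by omega⟩ + 1 ∧
      lam ⟨h, by omega⟩ = 1 ∧
      mu ⟨h, by omega⟩ = 0 ∧
      (∑ i, mu i) = k * (n - k) - (k - h) ∧
      (∑ i, lam i) = h + 1 := by
  set H : Fin (k + 1) := ⟨h, by omega⟩
  have hlam_ge : (h + 1) * lam H ≤ ∑ i, lam i := hlam.2.succ_mul_le_sum H
  have hmu_le : ∑ i, mu i ≤ h * (n - k) + (k + 1 - h) * mu H := hmu.2.sum_le_mul_add_mul hmu.1 H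
  have hparts : (h + 1) * lam H + k * (n - k) ≤ h * (n - k) + (k + 1 - h) * mu H + (k + 1) := by
    omega
  obtain ⟨hmu0, hlam1, rfl⟩ : mu H = 0 ∧ lam H = 1 ∧ h = k :=
    Nat.eq_zero_and_eq_one_and_eq_of_codim_le hh1 hhk hgt (hlam.1 H) (by omega) hparts
  rw [hlam1, mul_one] at hlam_ge
  rw [hmu0, mul_zero, add_zero] at hmu_le
  exact ⟨by omega, hlam1, hmu0, by omega, by omega⟩
end
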